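/- arXiv:2304.06769 — 4 statements merged into one kernel-verified Lean document; each statement's English description precedes it below -/
import Mathlib

section
/- Let X = {x ∈ ℝⁿ | H_x x ≤ h_x} be nonempty and Y = {y ∈ ℝᵖ | H_y y ≤ h_y}, with H_x ∈ ℝ^{m_x×n}, H_y ∈ ℝ^{m_y×p}. Given γ ∈ ℝᵖ and Γ ∈ ℝ^{p×n}, if there exists a matrix Λ ∈ ℝ^{m_y×m_x} with Λ ≥ 0 (entrywise), Λ H_x = H_y Γ, and Λ h_x ≤ h_y − H_y γ, then γ + ΓX ⊆ Y. -/
open Pointwise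

theorem ah_polytope_containment_sufficiency
    (n p mx my : ℕ) (Hx : Matrix (Fin mx) (Fin n) ℝ) (hx : Fin mx → ℝ)
    (Hy : Matrix (Fin my) (Fin p) ℝ) (hy : Fin my → ℝ)
    (γ : Fin p → ℝ) (Γ : Matrix (Fin p) (Fin n) ℝ)
    (hXne : {x : Fin n → ℝ | Hx.mulVec x ≤ hx}.Nonempty)
    (Λ : Matrix (Fin my) (Fin mx) ℝ)
    (hΛpos : ∀ i j, 0 ≤ Λ i j)
    (hΛeq : Λ * Hx = Hy * Γ)
    (hΛineq : Λ.mulVec hx ≤ hy - Hy.mulVec γ) :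
    ({γ} + Γ.mulVec '' {x : Fin n → ℝ | Hx.mulVec x ≤ hx}) ⊆
      {y : Fin p → ℝ | Hy.mulVec y ≤ hy} := by
  rintro y ⟨g, hg, z, ⟨x, hxmem, rfl⟩, rfl⟩
  rw [Set.mem_singleton_iff] at hg
  subst hg
  intro i
  simp only [Set.mem_setOf_eq] at hxmem ⊢
  have key : Λ.mulVec (Hx.mulVec x) ≤ Λ.mulVec hx := by
    intro j
    simp only [Matrix.mulVec, dotProduct]
    exact Finset.sum_le_sum fun k _ =>
      mul_le_mul_of_nonneg_left (hxmem k) (hΛpos j k)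
  have h1 : Hy.mulVec (g + Γ.mulVec x) i ≤ hy i := by
    have hm : Hy.mulVec (g + Γ.mulVec x) = Hy.mulVec g + Λ.mulVec (Hx.mulVec x) := by
      rw [Matrix.mulVec_add, Matrix.mulVec_mulVec, Matrix.mulVec_mulVec, hΛeq]
    rw [hm]
    have := key i
    have h2 := hΛineq i
    simp only [Pi.add_apply, Pi.sub_apply] at *
    linarith
  exact h1
end

section
/- Let X = {x ∈ ℝⁿ | H_x x ≤ h_x} be nonempty and compact, and Y = {y ∈ ℝᵖ | H_y y ≤ h_y}. Given γ ∈ ℝᵖ and Γ ∈ ℝ^{p×n}, if γ + ΓX ⊆ Y, then there exists Λ ∈ ℝ^{m_y×m_x} with Λ ≥ 0 entrywise, Λ H_x = H_y Γ, and Λ h_x ≤ h_y − H_y γ. -/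
/-!
This is LP duality in the form of the affine Farkas lemma. For each row `i` of `H_y`, containment
says that the affine functional `x ↦ (H_y Γ)_i x` is bounded by `(h_y - H_y γ)_i` on the nonempty
polyhedron `H_x x ≤ h_x`, and the affine Farkas lemma turns this into a nonnegative row `Λ_i`
certifying the bound. The affine Farkas lemma follows by homogenization from the separation of a
point from a finitely generated cone, which is closed by the conic Carathéodory theorem.
-/

open Finset Matrix Pointwise

section ConicCaratheodory

variable {V ι : Type*} [AddCommGroup V] [Module ℝ V] [DecidableEq ι] {v : ι → V}

lemma exists_nonneg_sum_erase_eq_of_relation {s : Finset ι} {μ g : ι → ℝ}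
    (hμ : ∀ i ∈ s, 0 ≤ μ i) (hg : ∑ i ∈ s, g i • v i = 0) {i₁ : ι} (hi₁ : i₁ ∈ s)
    (hg₁ : 0 < g i₁) :
    ∃ i₀ ∈ s, ∃ ν : ι → ℝ, (∀ i ∈ s.erase i₀, 0 ≤ ν i) ∧
      ∑ i ∈ s.erase i₀, ν i • v i = ∑ i ∈ s, μ i • v i := by
  -- Move along the relation `g` until the first coefficient hits zero.
  obtain ⟨i₀, hi₀, hmin⟩ := (s.filter (0 < g ·)).exists_min_image (fun i => μ i / g i)
    ⟨i₁, mem_filter.2 ⟨hi₁, hg₁⟩⟩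
  rw [mem_filter] at hi₀
  set τ := μ i₀ / g i₀
  have hτ : 0 ≤ τ := div_nonneg (hμ i₀ hi₀.1) hi₀.2.le
  refine ⟨i₀, hi₀.1, fun i => μ i - τ * g i, fun i hi => ?_, ?_⟩
  · have hi := mem_of_mem_erase hi
    rcases le_or_gt (g i) 0 with hgi | hgi
    · nlinarith [hμ i hi]
    · have := hmin i (mem_filter.2 ⟨hi, hgi⟩)
      rw [le_div_iff₀ hgi] at this
      linarith
  · rw [sum_erase _ (by simp [τ, div_mul_cancel₀ _ hi₀.2.ne'])]
    simp only [sub_smul, sum_sub_distrib, mul_smul, ← smul_sum, hg, smul_zero, sub_zero]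

lemma exists_linearIndepOn_nonneg_sum_eq (s : Finset ι) (μ : ι → ℝ) (hμ : ∀ i ∈ s, 0 ≤ μ i) :
    ∃ t ⊆ s, LinearIndepOn ℝ v (t : Set ι) ∧
      ∃ ν : ι → ℝ, (∀ i ∈ t, 0 ≤ ν i) ∧ ∑ i ∈ t, ν i • v i = ∑ i ∈ s, μ i • v i := by
  induction s using Finset.strongInduction generalizing μ with
  | H s ih =>
  by_cases hs : LinearIndepOn ℝ v (s : Set ι)
  · exact ⟨s, subset_rfl, hs, μ, hμ, rfl⟩
  obtain ⟨g, hg, i₁, hi₁, hg₁⟩ := not_linearIndepOn_finset_iff.1 hs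
  obtain ⟨i₀, hi₀, ν, hν, hsum⟩ : ∃ i₀ ∈ s, ∃ ν : ι → ℝ, (∀ i ∈ s.erase i₀, 0 ≤ ν i) ∧
      ∑ i ∈ s.erase i₀, ν i • v i = ∑ i ∈ s, μ i • v i := by
    rcases hg₁.lt_or_gt with hneg | hpos
    · exact exists_nonneg_sum_erase_eq_of_relation hμ (g := -g) (by simp [hg]) hi₁
        (by simpa using hneg)
    · exact exists_nonneg_sum_erase_eq_of_relation hμ hg hi₁ hpos
  obtain ⟨t, hts, ht, ν', hν', hsum'⟩ := ih _ (erase_ssubset hi₀) ν hν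
  exact ⟨t, hts.trans (erase_subset _ _), ht, ν', hν', hsum'.trans hsum⟩

end ConicCaratheodory

namespace PointedCone

variable {E ι : Type*} [AddCommGroup E] [Module ℝ E] {v : ι → E}

lemma mem_hull_range_iff [Fintype ι] {x : E} :
    x ∈ hull ℝ (Set.range v) ↔ ∃ μ : ι → ℝ, (∀ i, 0 ≤ μ i) ∧ ∑ i, μ i • v i = x := by
  rw [Submodule.mem_span_range_iff_exists_fun]
  constructor
  · rintro ⟨c, rfl⟩
    exact ⟨fun i => c i, fun i => (c i).2, rfl⟩
  · rintro ⟨μ, hμ, rfl⟩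
    exact ⟨fun i => ⟨μ i, hμ i⟩, rfl⟩

variable [TopologicalSpace E] [IsTopologicalAddGroup E] [ContinuousSMul ℝ E] [T2Space E]

lemma isClosed_hull_range [Finite ι] : IsClosed (hull ℝ (Set.range v) : Set E) := by
  classical
  have := Fintype.ofFinite ι
  -- By Carathéodory, only linearly independent generators are needed, and on those
  -- `Fintype.linearCombination` is a closed embedding.
  have hunion : (hull ℝ (Set.range v) : Set E) =
      ⋃ t : {t : Finset ι // LinearIndepOn ℝ v (t : Set ι)},
        Fintype.linearCombination ℝ (fun i : (t.1 : Set ι) => v i) '' {μ | 0 ≤ μ} := by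
    ext x
    simp only [SetLike.mem_coe, Set.mem_iUnion, Set.mem_image, Set.mem_ofPred_eq,
      Fintype.linearCombination_apply]
    constructor
    · rw [mem_hull_range_iff]
      rintro ⟨μ, hμ, rfl⟩
      obtain ⟨t, -, ht, ν, hν, hsum⟩ :=
        exists_linearIndepOn_nonneg_sum_eq (v := v) univ μ fun i _ => hμ i
      exact ⟨⟨t, ht⟩, fun i => ν i, fun i => hν i i.2, by rw [← hsum, ← sum_coe_sort t]; rfl⟩
    · rintro ⟨t, μ, hμ, rfl⟩
      exact sum_mem fun i _ => smul_mem _ (hμ i) (subset_hull ⟨i, rfl⟩)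
  rw [hunion]
  refine isClosed_iUnion_of_finite fun t => ?_
  have hinj := linearIndependent_iff_injective_fintypeLinearCombination.1 t.2
  exact (LinearMap.isClosedEmbedding_of_injective (LinearMap.ker_eq_bot.2 hinj)).isClosedMap _
    isClosed_Ici

lemma exists_strongDual_of_notMem_hull_range [LocallyConvexSpace ℝ E] [Finite ι] {x : E}
    (hx : x ∉ hull ℝ (Set.range v)) : ∃ f : StrongDual ℝ E, (∀ i, 0 ≤ f (v i)) ∧ f x < 0 := by
  obtain ⟨f, hf, hfx⟩ :=
    ProperCone.hyperplane_separation_point ⟨hull ℝ (Set.range v), isClosed_hull_range⟩ hx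
  exact ⟨f, fun i => hf _ (subset_hull ⟨i, rfl⟩), hfx⟩

end PointedCone

namespace Matrix

variable {m n : Type*} [Fintype n] (A : Matrix m n ℝ) (b : m → ℝ) (c : n → ℝ) (d : ℝ)

lemma exists_mulVec_le_and_lt_dotProduct {x₀ z : n → ℝ} {t : ℝ} (hx₀ : A *ᵥ x₀ ≤ b)
    (hx₀c : c ⬝ᵥ x₀ ≤ d) (ht : 0 ≤ t) (hz : ∀ i, 0 ≤ (A *ᵥ z) i + b i * t)
    (hcz : c ⬝ᵥ z + d * t < 0) : ∃ x, A *ᵥ x ≤ b ∧ d < c ⬝ᵥ x := by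
  -- Along `s ↦ (1 + s * t)⁻¹ • (x₀ - s • z)` the constraints stay satisfied; `s` is chosen so
  -- that the objective reaches `d + (1 + s * t)⁻¹`.
  set s := (d - c ⬝ᵥ x₀ + 1) / -(c ⬝ᵥ z + d * t)
  have hs : 0 ≤ s := div_nonneg (by linarith) (by linarith)
  have hsz : s * (c ⬝ᵥ z + d * t) = -(d - c ⬝ᵥ x₀ + 1) := by
    rw [div_mul_eq_mul_div, div_neg, mul_div_assoc, div_self hcz.ne, mul_one]
  have hk : 0 < 1 + s * t := by positivity
  refine ⟨(1 + s * t)⁻¹ • (x₀ - s • z), fun i => ?_, ?_⟩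
  · simp only [mulVec_smul, mulVec_sub, Pi.smul_apply, Pi.sub_apply, smul_eq_mul]
    rw [inv_mul_le_iff₀ hk]
    nlinarith [hx₀ i, hz i]
  · simp only [dotProduct_smul, dotProduct_sub, smul_eq_mul]
    rw [lt_inv_mul_iff₀ hk]
    nlinarith

theorem affine_farkas [Fintype m] (hne : ∃ x, A *ᵥ x ≤ b) (h : ∀ x, A *ᵥ x ≤ b → c ⬝ᵥ x ≤ d) :
    ∃ y : m → ℝ, 0 ≤ y ∧ y ᵥ* A = c ∧ y ⬝ᵥ b ≤ d := by
  classical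
  -- Homogenization: a certificate `y` is the same as a way of writing `(c, d)` as a nonnegative
  -- combination of the `(A i, b i)` and of `(0, 1)`.
  let v : Option m → (n → ℝ) × ℝ := fun o => o.elim (0, 1) fun i => (A i, b i)
  by_cases hmem : (c, d) ∈ PointedCone.hull ℝ (Set.range v)
  · obtain ⟨μ, hμ, hμv⟩ := PointedCone.mem_hull_range_iff.1 hmem
    simp only [Fintype.sum_option, Prod.ext_iff, Prod.fst_add, Prod.snd_add, Prod.fst_sum,
      Prod.snd_sum, v, Option.elim, Prod.smul_fst, Prod.smul_snd, smul_zero, smul_eq_mul,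
      mul_one, zero_add] at hμv
    refine ⟨fun i => μ (some i), fun i => hμ _, by rw [vecMul_eq_sum, hμv.1], ?_⟩
    have := hμ none
    simp only [dotProduct]
    linarith [hμv.2]
  · obtain ⟨f, hfv, hf⟩ := PointedCone.exists_strongDual_of_notMem_hull_range hmem
    obtain ⟨x₀, hx₀⟩ := hne
    let z : n → ℝ := fun j => f (fun k => if j = k then 1 else 0, 0)
    have hf_eq (w : n → ℝ) (s : ℝ) : f (w, s) = w ⬝ᵥ z + s * f (0, 1) := by
      have hg := LinearMap.pi_apply_eq_sum_univ
        ((f : (n → ℝ) × ℝ →ₗ[ℝ] ℝ).comp (LinearMap.inl ℝ (n → ℝ) ℝ)) w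
      simp only [LinearMap.comp_apply, LinearMap.inl_apply, ContinuousLinearMap.coe_coe,
        smul_eq_mul] at hg
      rw [show (w, s) = (w, 0) + s • (0, 1) by simp, map_add, map_smul, hg, smul_eq_mul]
      rfl
    obtain ⟨x, hx, hcx⟩ := exists_mulVec_le_and_lt_dotProduct A b c d hx₀ (h x₀ hx₀) (hfv none)
      (fun i => (hf_eq _ _).symm.trans_ge (hfv (some i)))
      (by rw [hf_eq] at hf; exact hf)
    exact absurd (h x hx) hcx.not_ge

end Matrix

theorem ah_polytope_containment_necessity_general
    (n p mx my : ℕ) (Hx : Matrix (Fin mx) (Fin n) ℝ) (hx : Fin mx → ℝ)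
    (Hy : Matrix (Fin my) (Fin p) ℝ) (hy : Fin my → ℝ)
    (γ : Fin p → ℝ) (Γ : Matrix (Fin p) (Fin n) ℝ)
    (hXne : {x : Fin n → ℝ | Hx.mulVec x ≤ hx}.Nonempty)
    (hsub : ({γ} + Γ.mulVec '' {x : Fin n → ℝ | Hx.mulVec x ≤ hx}) ⊆
      {y : Fin p → ℝ | Hy.mulVec y ≤ hy}) :
    ∃ Λ : Matrix (Fin my) (Fin mx) ℝ,
      (∀ i j, 0 ≤ Λ i j) ∧ Λ * Hx = Hy * Γ ∧ Λ.mulVec hx ≤ hy - Hy.mulVec γ := by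
  have hrow (i : Fin my) (x : Fin n → ℝ) (hxX : Hx *ᵥ x ≤ hx) :
      (Hy * Γ) i ⬝ᵥ x ≤ hy i - (Hy *ᵥ γ) i := by
    have hY := hsub (Set.add_mem_add rfl ⟨x, hxX, rfl⟩) i
    rw [mulVec_add, Pi.add_apply, mulVec_mulVec] at hY
    exact le_sub_iff_add_le'.2 hY
  choose Λ hΛ₀ hΛA hΛb using fun i =>
    Matrix.affine_farkas Hx hx ((Hy * Γ) i) (hy i - (Hy *ᵥ γ) i) hXne (hrow i)
  exact ⟨Matrix.of Λ, fun i => hΛ₀ i, funext hΛA, hΛb⟩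

theorem ah_polytope_containment_necessity
    (n p mx my : ℕ) (Hx : Matrix (Fin mx) (Fin n) ℝ) (hx : Fin mx → ℝ)
    (Hy : Matrix (Fin my) (Fin p) ℝ) (hy : Fin my → ℝ)
    (γ : Fin p → ℝ) (Γ : Matrix (Fin p) (Fin n) ℝ)
    (hXne : {x : Fin n → ℝ | Hx.mulVec x ≤ hx}.Nonempty)
    (hXcpt : IsCompact {x : Fin n → ℝ | Hx.mulVec x ≤ hx})
    (hsub : ({γ} + Γ.mulVec '' {x : Fin n → ℝ | Hx.mulVec x ≤ hx}) ⊆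
      {y : Fin p → ℝ | Hy.mulVec y ≤ hy}) :
    ∃ Λ : Matrix (Fin my) (Fin mx) ℝ,
      (∀ i j, 0 ≤ Λ i j) ∧ Λ * Hx = Hy * Γ ∧ Λ.mulVec hx ≤ hy - Hy.mulVec γ :=
  ah_polytope_containment_necessity_general n p mx my Hx hx Hy hy γ Γ hXne hsub
end

section
/- Let U₁,…,U_N ⊆ ℝᵀ and B₁,…,B_K ⊆ ℝᵀ be sets, μ ∈ ℝᵀ, and σ₁,…,σ_K ≥ 0. Suppose there exist vectors γ₁,…,γ_N ∈ ℝᵀ and matrices Γ_{k,i} ∈ ℝ^{T×T} such that μ = Σᵢ γᵢ, σ_k·I = Σᵢ Γ_{k,i} for every k, and γᵢ + Σ_k Γ_{k,i} B_k ⊆ Uᵢ for every i. Then μ + Σ_k σ_k B_k ⊆ Σᵢ Uᵢ, provided each B_k is nonempty. -/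
open Pointwise Finset

theorem multibattery_containment_sufficiency
    (T N K : ℕ) (U : Fin N → Set (Fin T → ℝ)) (B : Fin K → Set (Fin T → ℝ))
    (μ : Fin T → ℝ) (σ : Fin K → ℝ) (hσ : ∀ k, 0 ≤ σ k)
    (hBne : ∀ k, (B k).Nonempty)
    (γ : Fin N → (Fin T → ℝ)) (Γ : Fin K → Fin N → Matrix (Fin T) (Fin T) ℝ)
    (hμ : μ = ∑ i, γ i)
    (hσI : ∀ k, σ k • (1 : Matrix (Fin T) (Fin T) ℝ) = ∑ i, Γ k i)
    (hcont : ∀ i, ({γ i} + ∑ k, (Γ k i).mulVec '' (B k)) ⊆ U i) :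
    ({μ} + ∑ k, σ k • B k) ⊆ ∑ i, U i := by
  rintro x hx
  rw [Set.mem_add] at hx
  obtain ⟨m, hm, s, hs, rfl⟩ := hx
  rw [Set.mem_singleton_iff] at hm
  subst hm
  rw [Set.mem_fintype_sum] at hs
  obtain ⟨g, hg, rfl⟩ := hs
  -- g k ∈ σ k • B k, so g k = σ k • b k for some b k ∈ B k
  choose b hb hgb using fun k => (Set.mem_smul_set.mp (hg k))
  rw [Set.mem_fintype_sum]
  refine ⟨fun i => γ i + ∑ k, (Γ k i).mulVec (b k), fun i => ?_, ?_⟩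
  · apply hcont i
    rw [Set.mem_add]
    refine ⟨γ i, rfl, _, ?_, rfl⟩
    rw [Set.mem_fintype_sum]
    exact ⟨fun k => (Γ k i).mulVec (b k), fun k => ⟨b k, hb k, rfl⟩, rfl⟩
  · rw [hμ, Finset.sum_add_distrib, Finset.sum_comm]
    congr 1
    refine Finset.sum_congr rfl fun k _ => ?_
    rw [← hgb k]
    have : σ k • b k = (σ k • (1 : Matrix (Fin T) (Fin T) ℝ)).mulVec (b k) := by
      simp [Matrix.smul_mulVec, Matrix.one_mulVec]
    rw [this, hσI k]
    ext t
    simp [Matrix.mulVec, dotProduct, Matrix.sum_apply, Finset.sum_apply, Finset.sum_mul]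
    rw [Finset.sum_comm]
end

section
/- Let A ∈ ℝ^{m×n} and suppose X = {x | Ax ≤ b_x} and Y = {x | Ax ≤ b_y} are nonempty compact H-polytopes. Then there exists a constant L (depending only on A and the chosen norms) such that d_H(X, Y) ≤ L·‖b_x − b_y‖ for all such right-hand sides b_x, b_y, where d_H is the Hausdorff metric induced by a norm on ℝⁿ and ‖·‖ is a norm on ℝᵐ. -/
/-!
Hoffman's error bound. Let `y` be the Euclidean projection of `x` onto `P = {z | A z ≤ b}`.
Then `x - y` lies in the normal cone of `P` at `y`, the cone generated by the rows of `A` active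
at `y` (by separation, this cone being closed), and by Carathéodory it is a nonnegative
combination `∑ λᵢ aᵢ` of linearly independent active rows. For a linearly independent family the
coefficients are bounded by a constant times `‖x - y‖`, and there are finitely many such families.
If `A x ≤ b + c` then `‖x - y‖² = ∑ λᵢ ⟪aᵢ, x - y⟫ ≤ c ∑ λᵢ ≤ K c ‖x - y‖`, so `‖x - y‖ ≤ K c`.
-/

open Finset Filter Topology
open scoped InnerProductSpace

variable {ι E : Type*}

section ConicHull

variable [AddCommGroup E] [Module ℝ E]

def conicHull (a : ι → E) (s : Finset ι) : Set E :=
  {v | ∃ l : ι → ℝ, (∀ i ∈ s, 0 ≤ l i) ∧ ∑ i ∈ s, l i • a i = v}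

lemma zero_mem_conicHull (a : ι → E) (s : Finset ι) : (0 : E) ∈ conicHull a s :=
  ⟨0, fun _ _ => le_rfl, by simp⟩

lemma mem_conicHull_of_mem (a : ι → E) {s : Finset ι} {i : ι} (hi : i ∈ s) :
    a i ∈ conicHull a s := by
  classical
  refine ⟨fun j => if j = i then 1 else 0, fun j _ => by dsimp only; split_ifs <;> norm_num, ?_⟩
  simp [ite_smul, hi]

lemma smul_mem_conicHull {a : ι → E} {s : Finset ι} {v : E} (hv : v ∈ conicHull a s) {r : ℝ}
    (hr : 0 ≤ r) : r • v ∈ conicHull a s := by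
  obtain ⟨l, hl, rfl⟩ := hv
  exact ⟨r • l, fun i hi => mul_nonneg hr (hl i hi), by simp [Finset.smul_sum, smul_smul]⟩

lemma convex_conicHull (a : ι → E) (s : Finset ι) : Convex ℝ (conicHull a s) := by
  rintro _ ⟨l₁, hl₁, rfl⟩ _ ⟨l₂, hl₂, rfl⟩ p q hp hq -
  refine ⟨p • l₁ + q • l₂, fun i hi => ?_, ?_⟩
  · exact add_nonneg (mul_nonneg hp (hl₁ i hi)) (mul_nonneg hq (hl₂ i hi))
  · simp [add_smul, smul_smul, Finset.smul_sum, Finset.sum_add_distrib]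

lemma conicHull_mono (a : ι → E) {s t : Finset ι} (hst : s ⊆ t) :
    conicHull a s ⊆ conicHull a t := by
  classical
  rintro _ ⟨l, hl, rfl⟩
  refine ⟨fun i => if i ∈ s then l i else 0, fun i _ => ?_, ?_⟩
  · dsimp only
    split_ifs with h
    exacts [hl i h, le_rfl]
  · rw [← Finset.sum_subset hst fun i _ hi => by simp [hi]]
    exact Finset.sum_congr rfl fun i hi => by simp [hi]

lemma mem_conicHull_iff_exists_linearCombination {a : ι → E} {s : Finset ι} {v : E} :
    v ∈ conicHull a s ↔
      ∃ l : s → ℝ, 0 ≤ l ∧ Fintype.linearCombination ℝ (fun i : s => a i) l = v := by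
  classical
  simp only [Fintype.linearCombination_apply]
  constructor
  · rintro ⟨l, hl, rfl⟩
    exact ⟨fun i => l i, fun i => hl i i.2, Finset.sum_coe_sort s fun i => l i • a i⟩
  · rintro ⟨l, hl, rfl⟩
    refine ⟨fun i => if h : i ∈ s then l ⟨i, h⟩ else 0,
      fun i hi => by simpa [hi] using hl ⟨i, hi⟩, ?_⟩
    rw [← Finset.sum_coe_sort s]
    exact Finset.sum_congr rfl fun i _ => by simp

lemma exists_mem_conicHull_erase_of_not_linearIndepOn [DecidableEq ι] {a : ι → E}
    {s : Finset ι} {v : E} (hv : v ∈ conicHull a s) (hdep : ¬LinearIndepOn ℝ a s) :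
    ∃ i ∈ s, v ∈ conicHull a (s.erase i) := by
  obtain ⟨l, hl, rfl⟩ := hv
  obtain ⟨g, hg, j, hjs, hgj⟩ := not_linearIndepOn_finset_iff.mp hdep
  wlog hgj_pos : 0 < g j generalizing g
  · exact this (-g) (by simp [neg_smul, hg]) (neg_ne_zero.mpr hgj)
      (neg_pos.mpr (lt_of_le_of_ne (not_lt.mp hgj_pos) hgj))
  -- Move along the relation `g` as far as the coefficients stay nonnegative.
  obtain ⟨i₀, hi₀, hmin⟩ := (s.filter (0 < g ·)).exists_min_image (fun i => l i / g i)
    ⟨j, mem_filter.2 ⟨hjs, hgj_pos⟩⟩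
  rw [mem_filter] at hi₀
  set τ := l i₀ / g i₀
  have hτ : 0 ≤ τ := div_nonneg (hl _ hi₀.1) hi₀.2.le
  refine ⟨i₀, hi₀.1, l - τ • g, fun i hi => ?_, ?_⟩
  · have his := mem_of_mem_erase hi
    simp only [Pi.sub_apply, Pi.smul_apply, smul_eq_mul, sub_nonneg]
    rcases le_or_gt (g i) 0 with hgi | hgi
    · nlinarith [hl i his]
    · exact (le_div_iff₀ hgi).mp (hmin i (mem_filter.2 ⟨his, hgi⟩))
  · rw [Finset.sum_erase s (by simp [τ, div_mul_cancel₀ _ hi₀.2.ne'])]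
    simp [sub_smul, Finset.sum_sub_distrib, mul_smul, ← Finset.smul_sum, hg]

lemma exists_linearIndepOn_of_mem_conicHull {a : ι → E} {s : Finset ι} {v : E}
    (hv : v ∈ conicHull a s) : ∃ t ⊆ s, LinearIndepOn ℝ a t ∧ v ∈ conicHull a t := by
  classical
  induction s using Finset.strongInduction with
  | H s ih =>
    by_cases hind : LinearIndepOn ℝ a s
    · exact ⟨s, subset_rfl, hind, hv⟩
    · obtain ⟨i, hi, hvi⟩ := exists_mem_conicHull_erase_of_not_linearIndepOn hv hind
      obtain ⟨t, hts, ht, hvt⟩ := ih _ (erase_ssubset hi) hvi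
      exact ⟨t, hts.trans (erase_subset _ _), ht, hvt⟩

end ConicHull

section Normed

variable [NormedAddCommGroup E] [NormedSpace ℝ E]

lemma isClosed_conicHull_of_linearIndepOn {a : ι → E} {t : Finset ι}
    (ht : LinearIndepOn ℝ a t) : IsClosed (conicHull a t) := by
  have himage : conicHull a t = Fintype.linearCombination ℝ (fun i : t => a i) '' Set.Ici 0 := by
    ext v
    simp only [mem_conicHull_iff_exists_linearCombination, Set.mem_image, Set.mem_Ici]
  rw [himage]
  exact (LinearMap.isClosedEmbedding_of_injective (LinearMap.ker_eq_bot.2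
    ht.fintypeLinearCombination_injective)).isClosedMap _ isClosed_Ici

lemma isClosed_conicHull (a : ι → E) (s : Finset ι) : IsClosed (conicHull a s) := by
  have hunion : conicHull a s = ⋃ t ∈ {t | t ⊆ s ∧ LinearIndepOn ℝ a t}, conicHull a t := by
    ext v
    simp only [Set.mem_iUnion, Set.mem_ofPred_eq, exists_prop]
    constructor
    · intro hv
      obtain ⟨t, hts, ht, hvt⟩ := exists_linearIndepOn_of_mem_conicHull hv
      exact ⟨t, ⟨hts, ht⟩, hvt⟩
    · rintro ⟨t, ⟨hts, -⟩, hvt⟩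
      exact conicHull_mono a hts hvt
  rw [hunion]
  exact (s.powerset.finite_toSet.subset fun t ht => mem_powerset.2 ht.1).isClosed_biUnion
    fun t ht => isClosed_conicHull_of_linearIndepOn ht.2

lemma exists_abs_le_mul_norm_of_linearIndepOn {a : ι → E} {t : Finset ι}
    (ht : LinearIndepOn ℝ a t) :
    ∃ K, 0 ≤ K ∧ ∀ l : ι → ℝ, ∀ i ∈ t, |l i| ≤ K * ‖∑ j ∈ t, l j • a j‖ := by
  obtain ⟨K, -, hK⟩ := (Fintype.linearCombination ℝ (fun i : t => a i)).exists_antilipschitzWith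
    (LinearMap.ker_eq_bot.2 ht.fintypeLinearCombination_injective)
  refine ⟨K, K.2, fun l i hi => ?_⟩
  have hsum : Fintype.linearCombination ℝ (fun i : t => a i) (fun j => l j) =
      ∑ j ∈ t, l j • a j := by
    rw [Fintype.linearCombination_apply, Finset.sum_coe_sort t fun j => l j • a j]
  calc |l i| = ‖(fun j : t => l j) ⟨i, hi⟩‖ := (Real.norm_eq_abs _).symm
    _ ≤ ‖fun j : t => l j‖ := norm_le_pi_norm (fun j : t => l j) ⟨i, hi⟩
    _ ≤ K * ‖∑ j ∈ t, l j • a j‖ := by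
      rw [← hsum]
      exact ZeroHomClass.bound_of_antilipschitz _ hK _

lemma exists_forall_mem_conicHull_exists_sum_le [Fintype ι] (a : ι → E) :
    ∃ K, 0 ≤ K ∧ ∀ s : Finset ι, ∀ v ∈ conicHull a s, ∃ t ⊆ s, ∃ l : ι → ℝ,
      (∀ i ∈ t, 0 ≤ l i) ∧ ∑ i ∈ t, l i • a i = v ∧ ∑ i ∈ t, l i ≤ K * ‖v‖ := by
  have hK : ∀ t : Finset ι, ∃ K, 0 ≤ K ∧ (LinearIndepOn ℝ a t →
      ∀ l : ι → ℝ, ∀ i ∈ t, |l i| ≤ K * ‖∑ j ∈ t, l j • a j‖) := by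
    intro t
    by_cases ht : LinearIndepOn ℝ a t
    · obtain ⟨K, hK0, hK⟩ := exists_abs_le_mul_norm_of_linearIndepOn ht
      exact ⟨K, hK0, fun _ => hK⟩
    · exact ⟨0, le_rfl, fun h => absurd h ht⟩
  choose K hK0 hK using hK
  have hterm : ∀ t, 0 ≤ (#t : ℝ) * K t := fun t => mul_nonneg (Nat.cast_nonneg _) (hK0 t)
  refine ⟨∑ t, #t * K t, sum_nonneg fun t _ => hterm t, fun s v hv => ?_⟩
  obtain ⟨t, hts, ht, l, hl, rfl⟩ := exists_linearIndepOn_of_mem_conicHull hv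
  refine ⟨t, hts, l, hl, rfl, ?_⟩
  calc ∑ i ∈ t, l i ≤ ∑ _i ∈ t, K t * ‖∑ j ∈ t, l j • a j‖ :=
        sum_le_sum fun i hi => (le_abs_self _).trans (hK t ht l i hi)
    _ = #t * K t * ‖∑ j ∈ t, l j • a j‖ := by rw [sum_const, nsmul_eq_mul, mul_assoc]
    _ ≤ (∑ t, #t * K t) * ‖∑ j ∈ t, l j • a j‖ :=
        mul_le_mul_of_nonneg_right (single_le_sum (fun t _ => hterm t) (mem_univ t))
          (norm_nonneg _)

end Normed

section Polyhedron

variable [NormedAddCommGroup E] [InnerProductSpace ℝ E]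

def polyhedron (a : ι → E) (b : ι → ℝ) : Set E :=
  {z | ∀ i, ⟪a i, z⟫_ℝ ≤ b i}

lemma isClosed_polyhedron (a : ι → E) (b : ι → ℝ) : IsClosed (polyhedron a b) := by
  simp only [polyhedron, Set.ofPred_forall]
  exact isClosed_iInter fun i => isClosed_le (continuous_const.inner continuous_id) continuous_const

lemma convex_polyhedron (a : ι → E) (b : ι → ℝ) : Convex ℝ (polyhedron a b) := by
  intro z hz w hw p q hp hq hpq i
  rw [inner_add_right, real_inner_smul_right, real_inner_smul_right]
  have hb : p * b i + q * b i = b i := by rw [← add_mul, hpq, one_mul]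
  linarith [mul_le_mul_of_nonneg_left (hz i) hp, mul_le_mul_of_nonneg_left (hw i) hq]

lemma exists_pos_add_smul_mem_polyhedron [Finite ι] {a : ι → E} {b : ι → ℝ} {y d : E}
    (hy : y ∈ polyhedron a b) (hd : ∀ i, ⟪a i, y⟫_ℝ = b i → ⟪a i, d⟫_ℝ ≤ 0) :
    ∃ τ : ℝ, 0 < τ ∧ y + τ • d ∈ polyhedron a b := by
  have hev : ∀ i, ∀ᶠ τ in 𝓝[>] (0 : ℝ), ⟪a i, y + τ • d⟫_ℝ ≤ b i := by
    intro i
    simp only [inner_add_right, real_inner_smul_right]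
    rcases (hy i).eq_or_lt with hi | hi
    · filter_upwards [self_mem_nhdsWithin] with τ (hτ : 0 < τ)
      nlinarith [hd i hi]
    · have hlim : Tendsto (fun τ : ℝ => ⟪a i, y⟫_ℝ + τ * ⟪a i, d⟫_ℝ) (𝓝[>] 0)
          (𝓝 ⟪a i, y⟫_ℝ) :=
        ((continuous_const.add (continuous_id.mul continuous_const)).tendsto' 0 _
          (by simp)).mono_left nhdsWithin_le_nhds
      exact hlim.eventually (eventually_le_nhds hi)
  obtain ⟨τ, hτ, hτ0⟩ := ((eventually_all.2 hev).and self_mem_nhdsWithin).exists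
  exact ⟨τ, hτ0, hτ⟩

lemma exists_active_mem_conicHull_of_inner_le_zero [Finite ι] [CompleteSpace E] {a : ι → E}
    {b : ι → ℝ} {y v : E} (hy : y ∈ polyhedron a b)
    (hv : ∀ z ∈ polyhedron a b, ⟪v, z - y⟫_ℝ ≤ 0) :
    ∃ s : Finset ι, (∀ i ∈ s, ⟪a i, y⟫_ℝ = b i) ∧ v ∈ conicHull a s := by
  classical
  have := Fintype.ofFinite ι
  set s := univ.filter fun i => ⟪a i, y⟫_ℝ = b i
  refine ⟨s, fun i hi => (mem_filter.1 hi).2, ?_⟩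
  by_contra hvs
  obtain ⟨f, u, hfu, huv⟩ :=
    geometric_hahn_banach_closed_point (convex_conicHull a s) (isClosed_conicHull a s) hvs
  have hu : 0 < u := by simpa using hfu 0 (zero_mem_conicHull a s)
  have hf : ∀ w ∈ conicHull a s, f w ≤ 0 := by
    intro w hw
    by_contra! hfw
    have := hfu _ (smul_mem_conicHull hw (div_nonneg hu.le hfw.le))
    rw [map_smul, smul_eq_mul, div_mul_cancel₀ _ hfw.ne'] at this
    exact lt_irrefl _ this
  set d := (InnerProductSpace.toDual ℝ E).symm f
  have hd : ∀ w, ⟪d, w⟫_ℝ = f w := fun w => InnerProductSpace.toDual_symm_apply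
  obtain ⟨τ, hτ, hyτ⟩ := exists_pos_add_smul_mem_polyhedron hy fun i hi => by
    rw [real_inner_comm, hd]
    exact hf _ (mem_conicHull_of_mem a (mem_filter.2 ⟨mem_univ i, hi⟩))
  have hτv := hv _ hyτ
  rw [add_sub_cancel_left, real_inner_smul_right, real_inner_comm, hd] at hτv
  nlinarith

theorem exists_mem_polyhedron_norm_sub_le [Fintype ι] [CompleteSpace E] (a : ι → E) :
    ∃ L, 0 ≤ L ∧ ∀ (b : ι → ℝ) (x : E) (c : ℝ), 0 ≤ c → (polyhedron a b).Nonempty →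
      (∀ i, ⟪a i, x⟫_ℝ ≤ b i + c) → ∃ y ∈ polyhedron a b, ‖x - y‖ ≤ L * c := by
  obtain ⟨K, hK0, hK⟩ := exists_forall_mem_conicHull_exists_sum_le a
  refine ⟨K, hK0, fun b x c hc hne hx => ?_⟩
  obtain ⟨y, hy, hymin⟩ := exists_norm_eq_iInf_of_complete_convex hne
    (isClosed_polyhedron a b).isComplete (convex_polyhedron a b) x
  obtain ⟨s, hs, hxy⟩ := exists_active_mem_conicHull_of_inner_le_zero hy
    ((norm_eq_iInf_iff_real_inner_le_zero (convex_polyhedron a b) hy).1 hymin)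
  obtain ⟨t, hts, l, hl, hsum, hlK⟩ := hK s _ hxy
  refine ⟨y, hy, ?_⟩
  have hact : ∀ i ∈ t, ⟪a i, x - y⟫_ℝ ≤ c := fun i hi => by
    rw [inner_sub_right, hs i (hts hi)]
    linarith [hx i]
  have hsq : ‖x - y‖ * ‖x - y‖ ≤ ‖x - y‖ * (K * c) := calc
    ‖x - y‖ * ‖x - y‖ = ⟪∑ i ∈ t, l i • a i, x - y⟫_ℝ := by
      rw [hsum, real_inner_self_eq_norm_mul_norm]
    _ = ∑ i ∈ t, l i * ⟪a i, x - y⟫_ℝ := by simp only [sum_inner, real_inner_smul_left]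
    _ ≤ ∑ i ∈ t, l i * c := sum_le_sum fun i hi => mul_le_mul_of_nonneg_left (hact i hi) (hl i hi)
    _ = (∑ i ∈ t, l i) * c := (sum_mul ..).symm
    _ ≤ K * ‖x - y‖ * c := mul_le_mul_of_nonneg_right hlK hc
    _ = ‖x - y‖ * (K * c) := by ring
  rcases (norm_nonneg (x - y)).eq_or_lt with h | h
  · rw [← h]
    positivity
  · exact le_of_mul_le_mul_left hsq h

end Polyhedron

lemma exists_infDist_le_mul_norm_sub_of_mulVec_le {m n : Type*} [Fintype m] [Fintype n]
    (A : Matrix m n ℝ) :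
    ∃ L, 0 ≤ L ∧ ∀ b b' : m → ℝ, {x | A.mulVec x ≤ b'}.Nonempty → ∀ x ∈ {x | A.mulVec x ≤ b},
      Metric.infDist x {x | A.mulVec x ≤ b'} ≤ L * ‖b - b'‖ := by
  set a : m → EuclideanSpace ℝ n := fun i => WithLp.toLp 2 (A i)
  have hmem : ∀ b x, A.mulVec x ≤ b ↔ WithLp.toLp 2 x ∈ polyhedron a b := fun b x => by
    simp [polyhedron, a, Pi.le_def, EuclideanSpace.inner_toLp_toLp, Matrix.mulVec, dotProduct_comm]
  obtain ⟨L, hL0, hL⟩ := exists_mem_polyhedron_norm_sub_le a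
  refine ⟨L, hL0, fun b b' ⟨z, hz⟩ x hx => ?_⟩
  have hrhs : ∀ i, ⟪a i, WithLp.toLp 2 x⟫_ℝ ≤ b' i + ‖b - b'‖ := fun i => by
    have := (hmem b x).1 hx i
    linarith [(le_abs_self _).trans (norm_le_pi_norm (b - b') i), Pi.sub_apply b b' i]
  obtain ⟨y, hy, hxy⟩ := hL b' _ _ (norm_nonneg _) ⟨_, (hmem b' z).1 hz⟩ hrhs
  calc Metric.infDist x {x | A.mulVec x ≤ b'} ≤ dist x (WithLp.ofLp y) :=
        Metric.infDist_le_dist_of_mem ((hmem b' _).2 hy)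
    _ ≤ ‖WithLp.toLp 2 x - y‖ := by
        rw [dist_eq_norm, pi_norm_le_iff_of_nonneg (norm_nonneg _)]
        exact fun i => PiLp.norm_apply_le (WithLp.toLp 2 x - y) i
    _ ≤ L * ‖b - b'‖ := hxy

theorem polytope_lipschitz_in_rhs (m n : ℕ) (A : Matrix (Fin m) (Fin n) ℝ) :
    ∃ L : ℝ, ∀ bx by' : Fin m → ℝ,
      {x : Fin n → ℝ | A.mulVec x ≤ bx}.Nonempty →
      {x : Fin n → ℝ | A.mulVec x ≤ by'}.Nonempty →
      IsCompact {x : Fin n → ℝ | A.mulVec x ≤ bx} →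
      IsCompact {x : Fin n → ℝ | A.mulVec x ≤ by'} →
      Metric.hausdorffDist {x : Fin n → ℝ | A.mulVec x ≤ bx}
        {x : Fin n → ℝ | A.mulVec x ≤ by'} ≤ L * ‖bx - by'‖ := by
  obtain ⟨L, hL0, hL⟩ := exists_infDist_le_mul_norm_sub_of_mulVec_le A
  refine ⟨L, fun bx by' hx hy _ _ => ?_⟩
  refine Metric.hausdorffDist_le_of_infDist (by positivity) (hL bx by' hy) ?_
  simpa only [norm_sub_rev] using hL by' bx hx
end
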